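/- A single block move reduces the number of reversals of a permutation by at most 1; that is, if π' is obtained from π by removing one strip and reinserting it at another position, then rev(π') ≥ rev(π) − 1. -/
import Mathlib


/-- A run: each element is the successor of the previous one. -/
def IsRun (l : List ℕ) : Prop := l.Chain' (fun a b => b = a + 1)

/-- `noLink x y`: the optional value `y` does not continue the optional value `x` by +1. -/
def noLink (x y : Option ℕ) : Prop := ∀ a ∈ x, ∀ b ∈ y, b ≠ a + 1

/-- Number of "breaks" between consecutive entries (places where the successor chain stops). -/
def breaks (l : List ℕ) : ℕ := (l.zip l.tail).countP (fun p => decide (p.2 ≠ p.1 + 1))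

/-- Number of strips (maximal runs of consecutive increasing values). -/
def numStrips (l : List ℕ) : ℕ := if l = [] then 0 else 1 + breaks l

/-- Number of reversals (descents): adjacent pairs with the left entry larger. -/
def revCount (l : List ℕ) : ℕ := (l.zip l.tail).countP (fun p => decide (p.2 < p.1))

/-- `π'` is obtained from `π` by swapping two (disjoint) strips of `π`. -/
def StripSwap (π π' : List ℕ) : Prop :=
  ∃ A X B Y C : List ℕ,
    π = A ++ X ++ B ++ Y ++ C ∧
    π' = A ++ Y ++ B ++ X ++ C ∧
    X ≠ [] ∧ Y ≠ [] ∧ IsRun X ∧ IsRun Y ∧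
    noLink A.getLast? X.head? ∧ noLink X.getLast? (B ++ Y ++ C).head? ∧
    noLink (A ++ X ++ B).getLast? Y.head? ∧ noLink Y.getLast? C.head?

/-- `π'` is obtained from `π` by removing one strip and reinserting it at another position. -/
def BlockMove (π π' : List ℕ) : Prop :=
  ∃ A X B A' B' : List ℕ,
    π = A ++ X ++ B ∧
    X ≠ [] ∧ IsRun X ∧
    noLink A.getLast? X.head? ∧ noLink X.getLast? B.head? ∧
    A' ++ B' = A ++ B ∧ A' ≠ A ∧
    π' = A' ++ X ++ B'

/-- `StepsTo R k a b`: `b` is reachable from `a` in exactly `k` steps of the relation `R`. -/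
def StepsTo (R : List ℕ → List ℕ → Prop) : ℕ → List ℕ → List ℕ → Prop
  | 0 => fun a b => a = b
  | k + 1 => fun a b => ∃ c, R a c ∧ StepsTo R k c b

/-- The identity permutation of `{1,…,n}` in one-line notation. -/
def idPerm (n : ℕ) : List ℕ := List.range' 1 n

/-- Strip swap distance to the identity permutation of `{1,…,n}`. -/
noncomputable def SSD (n : ℕ) (π : List ℕ) : ℕ :=
  sInf {m | StepsTo StripSwap m π (idPerm n)}

/-- Block sorting distance to the identity permutation of `{1,…,n}`. -/
noncomputable def BS (n : ℕ) (π : List ℕ) : ℕ :=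
  sInf {m | StepsTo BlockMove m π (idPerm n)}


/-! ### Auxiliary machinery -/

/-- Boundary descent indicator between an optional last element and optional head. -/
def bdry : Option ℕ → Option ℕ → ℕ
  | some u, some v => if v < u then 1 else 0
  | _, _ => 0

lemma revCount_cons (a : ℕ) (l : List ℕ) :
    revCount (a :: l) = bdry (some a) l.head? + revCount l := by
  cases l with
  | nil => simp [revCount, bdry]
  | cons b t =>
    simp only [revCount, List.zip_cons_cons, List.tail_cons, List.countP_cons, List.head?_cons,
      bdry]
    split_ifs <;> simp_all <;> omega

lemma revCount_append (l m : List ℕ) :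
    revCount (l ++ m) = revCount l + revCount m + bdry l.getLast? m.head? := by
  induction l with
  | nil => simp [revCount, bdry]
  | cons a l ih =>
    cases l with
    | nil =>
      rw [List.singleton_append, revCount_cons]
      simp [revCount, bdry]
      cases m.head? <;> simp [bdry] <;> omega
    | cons b t =>
      rw [List.cons_append, revCount_cons, ih]
      conv_rhs => rw [revCount_cons]
      have h1 : ((b :: t) ++ m).head? = some b := rfl
      have h2 : (a :: b :: t).getLast? = (b :: t).getLast? := List.getLast?_cons_cons ..
      have h3 : (b :: t).head? = some b := rfl
      rw [h1, h2, h3]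
      ring

lemma core_bdry (x y : ℕ) (hxy : x ≤ y) (a b p q : Option ℕ)
    (ha : ∀ v ∈ a, v < x ∨ y < v) (hb : ∀ v ∈ b, v < x ∨ y < v)
    (hp : ∀ v ∈ p, v < x ∨ y < v) (hq : ∀ v ∈ q, v < x ∨ y < v) :
    bdry a (some x) + bdry (some y) b + bdry p q ≤
      bdry p (some x) + bdry (some y) q + bdry a b + 1 := by
  rcases a with _|a <;> rcases b with _|b <;> rcases p with _|p <;> rcases q with _|q <;>
    simp_all [bdry] <;> split_ifs <;> omega

lemma run_eq_range' : ∀ (a : ℕ) (t : List ℕ), IsRun (a :: t) → a :: t = List.range' a (t.length + 1)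
  | _, [], _ => rfl
  | a, b :: s, h => by
    obtain ⟨hb, hs⟩ := List.isChain_cons_cons.mp h
    subst hb
    have ih := run_eq_range' (a + 1) s hs
    show a :: (a + 1) :: s = a :: List.range' (a + 1) (s.length + 1)
    rw [← ih]

lemma getLast?_range'_1 (s n : ℕ) : (List.range' s (n + 1)).getLast? = some (s + n) := by
  rw [List.range'_1_concat, List.getLast?_concat]

/-- a single block move decreases the number of reversals by at most 1. -/
theorem blockMove_revCount_lower (n : ℕ) (π π' : List ℕ)
    (hperm : π.Perm (idPerm n)) (h : BlockMove π π') :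
    revCount π' ≥ revCount π - 1 := by
  obtain ⟨A, X, B, A', B', hpi, hXne, hrun, _, _, hAB, _, hpi'⟩ := h
  obtain ⟨x, t, rfl⟩ : ∃ x t, X = x :: t := by
    cases X with
    | nil => exact absurd rfl hXne
    | cons x t => exact ⟨x, t, rfl⟩
  set X := x :: t with hXdef
  set y := x + t.length with hydef
  have hXr : X = List.range' x (t.length + 1) := run_eq_range' x t hrun
  have hxy : x ≤ y := Nat.le_add_right ..
  have hXhead : X.head? = some x := rfl
  have hXlast : X.getLast? = some y := by rw [hXr]; exact getLast?_range'_1 x t.length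
  -- any element of A ++ B lies outside the interval [x, y]
  have hnd : π.Nodup := hperm.nodup_iff.mpr (List.nodup_range' ..)
  have hout : ∀ v ∈ A ++ B, v < x ∨ y < v := by
    intro v hv
    by_contra hcon
    push_neg at hcon
    have hvX : v ∈ X := by
      rw [hXr, List.mem_range']
      exact ⟨v - x, by omega, by omega⟩
    rw [hpi, List.append_assoc] at hnd
    rcases List.mem_append.mp hv with hvA | hvB
    · have hdisj : A.Disjoint (X ++ B) := List.disjoint_of_nodup_append hnd
      exact hdisj hvA (List.mem_append.mpr (Or.inl hvX))
    · have hnd2 : (X ++ B).Nodup := List.Nodup.of_append_right hnd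
      exact (List.disjoint_of_nodup_append hnd2) hvX hvB
  -- boundary-element outside facts
  have ha : ∀ v ∈ A.getLast?, v < x ∨ y < v := fun v hv =>
    hout v (List.mem_append.mpr (Or.inl (List.mem_of_mem_getLast? hv)))
  have hb : ∀ v ∈ B.head?, v < x ∨ y < v := fun v hv =>
    hout v (List.mem_append.mpr (Or.inr (List.mem_of_mem_head? hv)))
  have hp : ∀ v ∈ A'.getLast?, v < x ∨ y < v := fun v hv => by
    have : v ∈ A' ++ B' := List.mem_append.mpr (Or.inl (List.mem_of_mem_getLast? hv))
    rw [hAB] at this; exact hout v this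
  have hq : ∀ v ∈ B'.head?, v < x ∨ y < v := fun v hv => by
    have : v ∈ A' ++ B' := List.mem_append.mpr (Or.inr (List.mem_of_mem_head? hv))
    rw [hAB] at this; exact hout v this
  -- decompose revCounts
  have hXBhead : (X ++ B).head? = some x := rfl
  have hXB'head : (X ++ B').head? = some x := rfl
  have e1 : revCount π = revCount A + (revCount X + revCount B + bdry X.getLast? B.head?)
      + bdry A.getLast? (some x) := by
    rw [hpi, List.append_assoc, revCount_append, revCount_append, hXBhead]
  have e2 : revCount π' = revCount A' + (revCount X + revCount B' + bdry X.getLast? B'.head?)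
      + bdry A'.getLast? (some x) := by
    rw [hpi', List.append_assoc, revCount_append, revCount_append, hXB'head]
  have e3 : revCount A' + revCount B' + bdry A'.getLast? B'.head?
      = revCount A + revCount B + bdry A.getLast? B.head? := by
    rw [← revCount_append, ← revCount_append, hAB]
  rw [hXlast] at e1 e2
  have key := core_bdry x y hxy A.getLast? B.head? A'.getLast? B'.head? ha hb hp hq
  omega
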